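/- arXiv:1708.05918 — 5 statements merged into one kernel-verified Lean document; each statement's English description precedes it below -/
import Mathlib

section
/- Let p be a probability distribution on the finite set Fin k, let X_1, ..., X_n be independent samples drawn from p, and let p̂ be the empirical distribution (p̂_j = (1/n)·#{i : X_i = j}). Then for every ε > 0, the probability that ‖p̂ − p‖₁ ≥ ε is at most 2^k · exp(−n·ε²/2). -/
/-!
Put `d = p̂ - p`. Since `∑ j, d j = 0`, the `ℓ¹` norm of `d` is twice its positive part:
`‖d‖₁ = 2 ∑_{j ∈ S} d j` for `S = {j | p j ≤ p̂ j}`. So if `‖p̂ - p‖₁ ≥ ε`, then for one of the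
`2 ^ k` sets `S` the number of samples landing in `S` exceeds its mean `n p(S)` by `n ε / 2`.
The indicators `1[X i ∈ S]` are independent and take values in `[0, 1]`, so by Hoeffding's
inequality this has probability at most `exp (-2 (n ε / 2) ^ 2 / n) = exp (-n ε ^ 2 / 2)`;
a union bound over `S` finishes the proof.
-/

open MeasureTheory ProbabilityTheory Finset Real

section Hoeffding

variable {Ω : Type*} [MeasurableSpace Ω] {μ : Measure Ω} [IsProbabilityMeasure μ]

lemma hasSubgaussianMGF_indicator_one_sub_measureReal {A : Set Ω} (hA : MeasurableSet A) :
    HasSubgaussianMGF (fun ω ↦ A.indicator 1 ω - μ.real A) (1 / 4) μ := by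
  have h := hasSubgaussianMGF_of_mem_Icc (μ := μ) (a := 0) (b := 1)
    (measurable_one.indicator hA).aemeasurable
    (ae_of_all _ fun ω ↦ ⟨Set.indicator_nonneg (fun _ _ ↦ zero_le_one) ω,
      Set.indicator_le_self' (fun _ _ ↦ zero_le_one) ω⟩)
  rw [integral_indicator_one hA] at h
  convert h using 1
  norm_num

lemma measureReal_sum_indicator_sub_ge_le {ι α : Type*} [Fintype ι] [MeasurableSpace α]
    {X : ι → Ω → α} (hX : ∀ i, Measurable (X i)) (hindep : iIndepFun X μ)
    {S : Set α} (hS : MeasurableSet S) {q : ℝ} (hq : ∀ i, μ.real (X i ⁻¹' S) = q)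
    {t : ℝ} (ht : 0 ≤ t) :
    μ.real {ω | t ≤ ∑ i, (S.indicator 1 (X i ω) - q)}
      ≤ exp (-2 * t ^ 2 / Fintype.card ι) := by
  have hindep' : iIndepFun (fun i ω ↦ (X i ⁻¹' S).indicator 1 ω - q) μ :=
    hindep.comp (fun _ x ↦ S.indicator 1 x - q)
      fun _ ↦ (measurable_one.indicator hS).sub_const _
  refine (HasSubgaussianMGF.measure_sum_ge_le_of_iIndepFun hindep' (c := fun _ ↦ 1 / 4)
    (fun i _ ↦ hq i ▸ hasSubgaussianMGF_indicator_one_sub_measureReal (hX i hS)) ht).trans_eq ?_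
  simp only [sum_const, card_univ, nsmul_eq_mul, NNReal.coe_mul, NNReal.coe_natCast, NNReal.coe_div,
    NNReal.coe_one, NNReal.coe_ofNat]
  congr 1
  ring

end Hoeffding

lemma sum_abs_sub_eq_two_mul_sum_filter_le {ι : Type*} [Fintype ι] {u v : ι → ℝ}
    (h : ∑ j, u j = ∑ j, v j) :
    ∑ j, |u j - v j| = 2 * ∑ j with v j ≤ u j, (u j - v j) := by
  have h0 : ∑ j, (u j - v j) = 0 := by rw [sum_sub_distrib, h, sub_self]
  calc ∑ j, |u j - v j|
      = ∑ j, (2 * (if v j ≤ u j then u j - v j else 0) - (u j - v j)) := by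
        refine sum_congr rfl fun j _ ↦ ?_
        split_ifs with hj
        · rw [abs_of_nonneg (sub_nonneg.2 hj)]; ring
        · rw [abs_of_neg (sub_neg.2 (not_le.1 hj))]; ring
    _ = 2 * ∑ j with v j ≤ u j, (u j - v j) := by
        rw [sum_sub_distrib, h0, sub_zero, ← mul_sum, sum_filter]

lemma sum_card_fiber_eq_sum_indicator {ι α : Type*} [Fintype ι] [DecidableEq α]
    (x : ι → α) (S : Finset α) :
    ∑ j ∈ S, (#{i | x i = j} : ℝ) = ∑ i, (S : Set α).indicator 1 (x i) := by
  rw [← Nat.cast_sum, sum_card_fiberwise_eq_card_filter]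
  simp [Set.indicator_apply, sum_boole]

lemma exists_finset_card_mul_half_le_sum_indicator_sub {ι α : Type*} [Fintype ι] [Fintype α]
    [DecidableEq α] (x : ι → α) {p : α → ℝ} (hp1 : ∑ j, p j = 1) {ε : ℝ}
    (h : ε ≤ ∑ j, |1 / (Fintype.card ι : ℝ) * #{i | x i = j} - p j|) :
    ∃ S : Finset α,
      Fintype.card ι * ε / 2 ≤ ∑ i, ((S : Set α).indicator 1 (x i) - ∑ j ∈ S, p j) := by
  rcases isEmpty_or_nonempty ι with hι | hι
  · exact ⟨∅, by simp⟩
  set N : ℝ := (Fintype.card ι : ℝ)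
  have hN : 0 < N := Nat.cast_pos.2 Fintype.card_pos
  set f : α → ℝ := fun j ↦ 1 / N * #{i | x i = j}
  have hf : ∑ j, f j = ∑ j, p j := by
    rw [hp1, ← mul_sum, sum_card_fiber_eq_sum_indicator, coe_univ]
    simp [N, hN.ne']
  refine ⟨univ.filter fun j ↦ p j ≤ f j, ?_⟩
  have hhalf := h.trans_eq (sum_abs_sub_eq_two_mul_sum_filter_le hf)
  rw [sum_sub_distrib, ← mul_sum, sum_card_fiber_eq_sum_indicator] at hhalf
  rw [sum_sub_distrib, sum_const, card_univ, nsmul_eq_mul]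
  calc N * ε / 2 ≤ N * (2 * (1 / N * _ - _)) / 2 := by gcongr
    _ = _ := by
      rw [mul_comm 2, ← mul_assoc, mul_div_cancel_right₀ _ two_ne_zero, mul_sub, ← mul_assoc,
        mul_one_div_cancel hN.ne', one_mul]

theorem empirical_l1_concentration_general
    {Ω : Type*} [MeasurableSpace Ω] (μ : Measure Ω) [IsProbabilityMeasure μ]
    (k n : ℕ) (p : Fin k → ℝ) (hp1 : ∑ j, p j = 1)
    (X : Fin n → Ω → Fin k) (hXmeas : ∀ i, Measurable (X i))
    (hindep : iIndepFun X μ)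
    (hlaw : ∀ i j, (μ {ω | X i ω = j}).toReal = p j)
    (phat : Ω → Fin k → ℝ)
    (hphat : ∀ ω j, phat ω j
      = (1 / (n : ℝ)) * (Finset.univ.filter (fun i => X i ω = j)).card)
    (ε : ℝ) (hε : 0 < ε) :
    (μ {ω | ε ≤ ∑ j, |phat ω j - p j|}).toReal
      ≤ 2 ^ k * Real.exp (-(n : ℝ) * ε ^ 2 / 2) := by
  set bad : Finset (Fin k) → Set Ω := fun S ↦
    {ω | n * ε / 2 ≤ ∑ i, ((S : Set (Fin k)).indicator 1 (X i ω) - ∑ j ∈ S, p j)}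
  have hcover : {ω | ε ≤ ∑ j, |phat ω j - p j|} ⊆ ⋃ S, bad S := fun ω hω ↦ by
    obtain ⟨S, hS⟩ := exists_finset_card_mul_half_le_sum_indicator_sub (X · ω) hp1
      (by simpa only [Set.mem_ofPred_eq, Fintype.card_fin, hphat] using hω)
    exact Set.mem_iUnion.2
      ⟨S, by simpa only [bad, Set.mem_ofPred_eq, Fintype.card_fin] using hS⟩
  have hbad : ∀ S, μ.real (bad S) ≤ exp (-(n : ℝ) * ε ^ 2 / 2) := fun S ↦ by
    have hlawS : ∀ i, μ.real (X i ⁻¹' S) = ∑ j ∈ S, p j := fun i ↦ by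
      rw [← sum_measureReal_preimage_singleton S fun j _ ↦ hXmeas i (measurableSet_singleton j)]
      exact sum_congr rfl fun j _ ↦ hlaw i j
    calc μ.real (bad S) ≤ exp (-2 * (n * ε / 2) ^ 2 / Fintype.card (Fin n)) :=
          measureReal_sum_indicator_sub_ge_le hXmeas hindep S.measurableSet hlawS (by positivity)
      _ = _ := by
          rw [Fintype.card_fin]
          rcases eq_or_ne n 0 with rfl | hn
          · simp
          · field_simp
  calc (μ _).toReal ≤ ∑ S, μ.real (bad S) :=
        (measureReal_mono hcover).trans (measureReal_iUnion_fintype_le bad)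
    _ ≤ ∑ S : Finset (Fin k), exp (-(n : ℝ) * ε ^ 2 / 2) := sum_le_sum fun S _ ↦ hbad S
    _ = _ := by simp

/-- If `p` is a probability distribution on `Fin k`, `X 0, ..., X (n-1)` are
independent samples drawn from `p`, and `phat ω` is the empirical distribution
(`phat ω j = (1/n) * #{i : X i ω = j}`), then for every `ε > 0` the probability that
`‖phat - p‖₁ ≥ ε` is at most `2 ^ k * exp (-n * ε ^ 2 / 2)`. -/
theorem empirical_l1_concentration
    {Ω : Type*} [MeasurableSpace Ω] (μ : Measure Ω) [IsProbabilityMeasure μ]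
    (k n : ℕ) (p : Fin k → ℝ) (hp0 : ∀ j, 0 ≤ p j) (hp1 : ∑ j, p j = 1)
    (X : Fin n → Ω → Fin k) (hXmeas : ∀ i, Measurable (X i))
    (hindep : iIndepFun X μ)
    (hlaw : ∀ i j, (μ {ω | X i ω = j}).toReal = p j)
    (phat : Ω → Fin k → ℝ)
    (hphat : ∀ ω j, phat ω j
      = (1 / (n : ℝ)) * (Finset.univ.filter (fun i => X i ω = j)).card)
    (ε : ℝ) (hε : 0 < ε) :
    (μ {ω | ε ≤ ∑ j, |phat ω j - p j|}).toReal
      ≤ 2 ^ k * Real.exp (-(n : ℝ) * ε ^ 2 / 2) :=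
  empirical_l1_concentration_general μ k n p hp1 X hXmeas hindep hlaw phat hphat ε hε
end

section
/- Holm–Bonferroni controls family-wise error: let D_1, ..., D_m : Ω → ℝ be P-values for m null hypotheses, let T ⊆ {1, ..., m} be the nonempty set of true null hypotheses with |T| = m₀, and suppose each D_i with i ∈ T is superuniform (P(D_i ≤ u) ≤ u for all u ∈ [0,1]). The Holm procedure at level δ sorts the P-values in increasing order as D_(1) ≤ ... ≤ D_(m), finds the minimal index j (starting from 1) with D_(j) > δ/(m − j + 1) (taking j = m + 1 if none exists), and rejects exactly the hypotheses at sorted positions 1, ..., j − 1. Then the probability that the Holm procedure rejects at least one hypothesis in T is at most δ. -/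
/-! If Holm rejects a true null, then the first true null in sorted order, at position `k`, is
rejected as well. At most `m - m₀` false nulls precede it, so `k ≤ m - m₀` and its threshold
`δ / (m - k)` is at most `δ / m₀`: some true-null P-value is `≤ δ / m₀`. A union bound over the
`m₀` superuniform true-null P-values bounds the probability of this by `m₀ · δ / m₀ = δ`. -/

open MeasureTheory

/-- The Holm procedure at level `δ` applied to the P-values `d : Fin m → ℝ` rejects the
hypothesis at (original) index `i`: sorting the P-values in increasing order as
`d ∘ Tuple.sort d`, the hypothesis at sorted position `j` (0-indexed, i.e. position `j + 1`
when 1-indexed) is rejected exactly when every sorted position `l ≤ j` satisfies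
`d_(l) ≤ δ / (m - (l+1) + 1) = δ / (m - l)`, i.e. when the minimal sorted index at which the
Holm threshold is exceeded lies strictly beyond `j`. -/
def holmRejects {m : ℕ} (δ : ℝ) (d : Fin m → ℝ) (i : Fin m) : Prop :=
  ∃ j : Fin m, Tuple.sort d j = i ∧
    ∀ l : Fin m, l ≤ j → d (Tuple.sort d l) ≤ δ / ((m : ℝ) - (l : ℝ))

open Finset

lemma val_add_card_le_card_of_forall_lt_notMem {α : Type*} [Fintype α] [DecidableEq α] {n : ℕ}
    (σ : Fin n ↪ α) {T : Finset α} {k : Fin n} (h : ∀ l < k, σ l ∉ T) :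
    (k : ℕ) + #T ≤ Fintype.card α := by
  have hdisj : Disjoint ((Iio k).map σ) T := by
    refine disjoint_left.mpr fun x hx => ?_
    obtain ⟨l, hl, rfl⟩ := mem_map.mp hx
    exact h l (mem_Iio.mp hl)
  simpa [card_union_of_disjoint hdisj] using card_le_univ ((Iio k).map σ ∪ T)

lemma holmRejects.exists_le_div_card {m : ℕ} {δ : ℝ} {d : Fin m → ℝ} {T : Finset (Fin m)}
    {i : Fin m} (hδ : 0 ≤ δ) (hi : i ∈ T) (h : holmRejects δ d i) :
    ∃ i' ∈ T, d i' ≤ δ / #T := by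
  obtain ⟨j, rfl, hle⟩ := h
  obtain ⟨k, hkj, hkT, hk_first⟩ :
      ∃ k ≤ j, Tuple.sort d k ∈ T ∧ ∀ l < k, Tuple.sort d l ∉ T := by
    obtain ⟨k, hkj, hk⟩ := exists_minimal_le_of_wellFoundedLT (Tuple.sort d · ∈ T) j hi
    exact ⟨k, hkj, minimal_iff_forall_lt.mp hk⟩
  have hcard : (#T : ℝ) ≤ m - k := by
    have := val_add_card_le_card_of_forall_lt_notMem (Tuple.sort d).toEmbedding hk_first
    rw [Fintype.card_fin] at this
    rw [le_sub_iff_add_le']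
    exact_mod_cast this
  have hT : (0 : ℝ) < #T := by exact_mod_cast card_pos.mpr ⟨_, hkT⟩
  exact ⟨_, hkT, (hle k hkj).trans (div_le_div_of_nonneg_left hδ hT hcard)⟩

lemma measureReal_exists_le_le_card_mul {Ω ι : Type*} [MeasurableSpace Ω] (μ : Measure Ω)
    (D : ι → Ω → ℝ) (T : Finset ι) {u : ℝ} (h : ∀ i ∈ T, μ.real {ω | D i ω ≤ u} ≤ u) :
    μ.real {ω | ∃ i ∈ T, D i ω ≤ u} ≤ #T * u := by
  have hunion : {ω | ∃ i ∈ T, D i ω ≤ u} = ⋃ i ∈ T, {ω | D i ω ≤ u} := by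
    ext ω; simp
  calc μ.real {ω | ∃ i ∈ T, D i ω ≤ u}
      ≤ ∑ i ∈ T, μ.real {ω | D i ω ≤ u} := hunion ▸ measureReal_biUnion_finset_le T _
    _ ≤ ∑ _i ∈ T, u := sum_le_sum h
    _ = #T * u := by rw [sum_const, nsmul_eq_mul]

/-- **Holm–Bonferroni controls family-wise error.** Let `D 0, ..., D (m-1)` be
P-values for `m` null hypotheses, let `T` be the nonempty set of true null hypotheses, and
suppose each `D i` with `i ∈ T` is superuniform. Then the probability that the Holm procedure
at level `δ` rejects at least one hypothesis in `T` is at most `δ`. -/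
theorem holm_bonferroni_fwer
    {Ω : Type*} [MeasurableSpace Ω] (μ : Measure Ω) [IsProbabilityMeasure μ]
    (m : ℕ) (D : Fin m → Ω → ℝ)
    (T : Finset (Fin m)) (hT : T.Nonempty)
    (hsuper : ∀ i ∈ T, ∀ u : ℝ, 0 ≤ u → u ≤ 1 → (μ {ω | D i ω ≤ u}).toReal ≤ u)
    (δ : ℝ) (hδ0 : 0 ≤ δ) (hδ1 : δ ≤ 1) :
    (μ {ω | ∃ i ∈ T, holmRejects δ (fun l => D l ω) i}).toReal ≤ δ := by
  have hm₀ : (1 : ℝ) ≤ #T := by exact_mod_cast hT.card_pos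
  have hu0 : 0 ≤ δ / #T := by positivity
  have hu1 : δ / #T ≤ 1 := div_le_one_of_le₀ (hδ1.trans hm₀) (by positivity)
  calc μ.real {ω | ∃ i ∈ T, holmRejects δ (fun l => D l ω) i}
      ≤ μ.real {ω | ∃ i ∈ T, D i ω ≤ δ / #T} :=
        measureReal_mono fun ω ⟨_, hi, hrej⟩ => hrej.exists_le_div_card hδ0 hi
    _ ≤ #T * (δ / #T) :=
        measureReal_exists_le_le_card_mul μ D T fun i hi => hsuper i hi _ hu0 hu1
    _ = δ := mul_div_cancel₀ δ (by positivity)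
end

section
/- The lower tail of the hypergeometric distribution is non-increasing in the number of success states: for fixed population size N, sample size m ≤ N, and threshold 0 ≤ j ≤ m, if K ≤ K' ≤ N are two possible numbers of success states, then Σ_{l=0}^{j} C(K', l)·C(N − K', m − l)/C(N, m) ≤ Σ_{l=0}^{j} C(K, l)·C(N − K, m − l)/C(N, m). -/
open Finset

/-- Pascal's rule with truncated subtraction. -/
lemma pascal_sub {a b : ℕ} (ha : 1 ≤ a) (hb : 1 ≤ b) :
    a.choose b = (a-1).choose (b-1) + (a-1).choose b := by
  obtain ⟨a', rfl⟩ : ∃ a', a = a' + 1 := ⟨a - 1, by omega⟩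
  obtain ⟨b', rfl⟩ : ∃ b', b = b' + 1 := ⟨b - 1, by omega⟩
  simp [Nat.choose_succ_succ]

lemma ident (N m K j : ℕ) (hK : K < N) (hj : j < m) :
    ∑ l ∈ range (j+1), K.choose l * (N-K).choose (m-l)
      = (∑ l ∈ range (j+1), (K+1).choose l * (N-(K+1)).choose (m-l))
        + K.choose j * (N-K-1).choose (m-j-1) := by
  induction j with
  | zero =>
      simp only [zero_add, Finset.sum_range_one, Nat.choose_zero_right, one_mul, Nat.sub_zero]
      have h1 : (N-K).choose m = (N-K-1).choose (m-1) + (N-K-1).choose m :=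
        pascal_sub (by omega) (by omega)
      have h2 : N - (K+1) = N - K - 1 := by omega
      rw [h2, h1]; omega
  | succ j ih =>
      have hj' : j < m := by omega
      rw [Finset.sum_range_succ _ (j+1), ih hj', Finset.sum_range_succ _ (j+1)]
      have e1 : (K+1).choose (j+1) = K.choose j + K.choose (j+1) :=
        Nat.choose_succ_succ K j
      have e2 : (N-K).choose (m-(j+1)) =
          (N-K-1).choose (m-(j+1)-1) + (N-K-1).choose (m-(j+1)) :=
        pascal_sub (by omega) (by omega)
      have e3 : N - (K+1) = N - K - 1 := by omega
      have e4 : m - j - 1 = m - (j+1) := by omega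
      rw [e1, e2, e3, e4]
      ring

lemma step (N m j K : ℕ) (hj : j ≤ m) (hK : K < N) :
    ∑ l ∈ range (j+1), (K+1).choose l * (N-(K+1)).choose (m-l)
      ≤ ∑ l ∈ range (j+1), K.choose l * (N-K).choose (m-l) := by
  rcases lt_or_eq_of_le hj with h | rfl
  · rw [ident N m K j hK h]; omega
  · have v : ∀ M : ℕ, M ≤ N → ∑ l ∈ range (j+1), M.choose l * (N-M).choose (j-l)
        = N.choose j := by
      intro M hM
      have h := Nat.add_choose_eq M (N - M) j
      rw [Nat.add_sub_cancel' hM] at h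
      rw [h, Finset.Nat.sum_antidiagonal_eq_sum_range_succ_mk]
    rw [v (K+1) (by omega), v K (by omega)]

/-- The lower tail of the hypergeometric distribution is non-increasing in
the number of success states: for fixed population size `N`, sample size `m ≤ N`, and
threshold `0 ≤ j ≤ m`, if `K ≤ K' ≤ N`, then
`∑_{l=0}^{j} C(K', l) * C(N - K', m - l) / C(N, m)
  ≤ ∑_{l=0}^{j} C(K, l) * C(N - K, m - l) / C(N, m)`. -/
theorem hypergeometric_lower_tail_mono
    (N m j K K' : ℕ) (hm : m ≤ N) (hj : j ≤ m) (hKK' : K ≤ K') (hK'N : K' ≤ N) :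
    ∑ l ∈ Finset.range (j + 1),
        (K'.choose l * (N - K').choose (m - l) : ℝ) / (N.choose m)
      ≤ ∑ l ∈ Finset.range (j + 1),
        (K.choose l * (N - K).choose (m - l) : ℝ) / (N.choose m) := by
  have key : ∀ x, K ≤ x → x ≤ N →
      ∑ l ∈ range (j+1), x.choose l * (N-x).choose (m-l)
        ≤ ∑ l ∈ range (j+1), K.choose l * (N-K).choose (m-l) := by
    intro x hx
    induction x, hx using Nat.le_induction with
    | base => intro _; exact le_refl _
    | succ n hn ih =>
        intro hN
        exact le_trans (step N m j n hj (by omega)) (ih (by omega))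
  have hpos : (0:ℝ) < N.choose m := by
    exact_mod_cast Nat.choose_pos hm
  rw [← Finset.sum_div, ← Finset.sum_div]
  apply div_le_div_of_nonneg_right ?_ hpos.le |>.trans_eq rfl
  exact_mod_cast key K' hKK' hK'N
end

section
/- Validity of the underrepresentation P-value: let U be a finite set with |U| = N, let A ⊆ U with |A| = K, let σ ∈ (0,1], and let S be a uniformly random m-element subset of U. If K ≥ ⌈σ·N⌉ (i.e., candidate A meets the selectivity threshold), then for every observed count j, P(|S ∩ A| ≤ j) ≤ Σ_{l=0}^{j} C(⌈σN⌉, l)·C(N − ⌈σN⌉, m − l)/C(N, m). Hence, rejecting the null hypothesis 'K ≥ ⌈σN⌉' whenever this sum is at most δ_i yields a test whose probability of falsely rejecting is at most δ_i. -/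
/-!
Pick `B ⊆ A` with `|B| = ⌈σN⌉`. Every `S` with `|S ∩ A| ≤ j` has `|S ∩ B| ≤ j`, and
`S ↦ (S ∩ B, S \ B)` injects the `m`-subsets with `|S ∩ B| = l` into
(`l`-subsets of `B`) × (`(m - l)`-subsets of `U \ B`), so the lower tail at `A` is dominated by
the hypergeometric lower tail at `⌈σN⌉`.

Validity of the test holds for any `ℕ`-valued statistic `X` and any `F` dominating its
distribution function: on `{X ≤ n}` the rejection event `{F ∘ X ≤ δ}` lies inside `{X ≤ X S₀}`
for a rejected `S₀` with maximal `X`, which has probability at most `F (X S₀) ≤ δ`; continuity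
from below lets `n → ∞`.
-/

namespace PMF

variable {β : Type*} (p : PMF β) (X : β → ℕ) (F : ℕ → ℝ)

theorem toReal_toOuterMeasure_le_of_cdf_le
    (hF : ∀ j, (p.toOuterMeasure {b | X b ≤ j}).toReal ≤ F j) (δ : ℝ) (hδ : 0 ≤ δ) :
    (p.toOuterMeasure {b | F (X b) ≤ δ}).toReal ≤ δ := by
  -- with the discrete σ-algebra, `p.toMeasure` agrees with `p.toOuterMeasure` on every set
  let _ : MeasurableSpace β := ⊤
  have hμ : ∀ s, p.toMeasure s = p.toOuterMeasure s := fun _ =>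
    p.toMeasure_apply_eq_toOuterMeasure_apply MeasurableSpace.measurableSet_top
  set T := {b | F (X b) ≤ δ}
  have htrunc : ∀ n, p.toMeasure (T ∩ {b | X b ≤ n}) ≤ ENNReal.ofReal δ := by
    intro n
    rcases (T ∩ {b | X b ≤ n}).eq_empty_or_nonempty with hempty | hne
    · simp [hempty]
    have hbdd : BddAbove (X '' (T ∩ {b | X b ≤ n})) := ⟨n, by rintro _ ⟨b, hb, rfl⟩; exact hb.2⟩
    obtain ⟨b₀, hb₀, hmax⟩ := Nat.sSup_mem (hne.image X) hbdd
    calc p.toMeasure (T ∩ {b | X b ≤ n})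
        ≤ p.toMeasure {b | X b ≤ X b₀} := by
          refine MeasureTheory.measure_mono fun b hb => ?_
          rw [Set.mem_ofPred_eq, hmax]
          exact le_csSup hbdd ⟨b, hb, rfl⟩
      _ ≤ ENNReal.ofReal (F (X b₀)) := by
          rw [ENNReal.le_ofReal_iff_toReal_le (MeasureTheory.measure_ne_top _ _)
            (ENNReal.toReal_nonneg.trans (hF _)), hμ]
          exact hF _
      _ ≤ ENNReal.ofReal δ := ENNReal.ofReal_le_ofReal hb₀.1
  have hT : T = ⋃ n, T ∩ {b | X b ≤ n} := by
    rw [← Set.inter_iUnion, Set.iUnion_eq_univ_iff.mpr fun b => ⟨X b, le_refl (X b)⟩,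
      Set.inter_univ]
  rw [← hμ, hT, Monotone.measure_iUnion]
  · exact ENNReal.toReal_le_of_le_ofReal hδ (iSup_le htrunc)
  · exact fun m n hmn => Set.inter_subset_inter_right _ fun b (hb : X b ≤ m) => hb.trans hmn

end PMF

namespace Finset

variable {α : Type*} [DecidableEq α] {U A : Finset α}

theorem card_filter_powersetCard_card_inter_eq_le (hAU : A ⊆ U) (m l : ℕ) :
    #{S ∈ U.powersetCard m | #(S ∩ A) = l} ≤ (#A).choose l * (#U - #A).choose (m - l) := by
  rw [← card_sdiff_of_subset hAU, ← card_powersetCard, ← card_powersetCard, ← card_product]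
  refine card_le_card_of_injOn (fun S => (S ∩ A, S \ A)) ?_ ?_
  · intro S hS
    simp only [coe_filter, mem_powersetCard, Set.mem_ofPred_eq] at hS
    obtain ⟨⟨hSU, hScard⟩, hl⟩ := hS
    have hsplit := card_inter_add_card_sdiff S A
    simp only [coe_product, Set.mem_prod, mem_coe, mem_powersetCard]
    exact ⟨⟨inter_subset_right, hl⟩, sdiff_subset_sdiff hSU subset_rfl, by omega⟩
  · intro S _ T _ h
    rw [← sdiff_union_inter S A, ← sdiff_union_inter T A]
    simp only [Prod.mk.injEq] at h
    rw [h.1, h.2]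

theorem card_filter_powersetCard_card_inter_le_le (hAU : A ⊆ U) (m j : ℕ) :
    #{S ∈ U.powersetCard m | #(S ∩ A) ≤ j}
      ≤ ∑ l ∈ range (j + 1), (#A).choose l * (#U - #A).choose (m - l) := by
  rw [card_eq_sum_card_fiberwise (f := fun S => #(S ∩ A)) (t := range (j + 1))
    fun S hS => by simpa [Nat.lt_succ_iff] using (mem_filter.mp hS).2]
  refine sum_le_sum fun l _ => le_trans (card_le_card fun S hS => ?_)
    (card_filter_powersetCard_card_inter_eq_le hAU m l)
  simp only [mem_filter] at hS ⊢
  exact ⟨hS.1.1, hS.2⟩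

end Finset

open Finset

theorem underrepresentation_pvalue_valid_general {α : Type*} [DecidableEq α]
    (U A : Finset α) (hAU : A ⊆ U)
    (N K m : ℕ) (hN : U.card = N) (hK : A.card = K)
    (σ : ℝ)
    (hsel : ⌈σ * (N : ℝ)⌉₊ ≤ K)
    (hne : (U.powersetCard m).Nonempty) :
    (∀ j : ℕ,
      ((PMF.uniformOfFinset (U.powersetCard m) hne).toOuterMeasure
          {S | (S ∩ A).card ≤ j}).toReal
        ≤ ∑ l ∈ Finset.range (j + 1),
            ((⌈σ * (N : ℝ)⌉₊.choose l * (N - ⌈σ * (N : ℝ)⌉₊).choose (m - l) : ℝ)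
              / (N.choose m)))
    ∧ ∀ δi : ℝ, 0 ≤ δi →
      ((PMF.uniformOfFinset (U.powersetCard m) hne).toOuterMeasure
          {S | (∑ l ∈ Finset.range ((S ∩ A).card + 1),
            ((⌈σ * (N : ℝ)⌉₊.choose l * (N - ⌈σ * (N : ℝ)⌉₊).choose (m - l) : ℝ)
              / (N.choose m))) ≤ δi}).toReal
        ≤ δi := by
  set F : ℕ → ℝ := fun j => ∑ l ∈ range (j + 1),
    ((⌈σ * (N : ℝ)⌉₊.choose l * (N - ⌈σ * (N : ℝ)⌉₊).choose (m - l) : ℝ) / (N.choose m))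
  obtain ⟨B, hBA, hB⟩ := exists_subset_card_eq (hsel.trans hK.ge)
  have hcdf : ∀ j : ℕ, ((PMF.uniformOfFinset (U.powersetCard m) hne).toOuterMeasure
      {S | #(S ∩ A) ≤ j}).toReal ≤ F j := by
    intro j
    have hcount : #{S ∈ U.powersetCard m | #(S ∩ A) ≤ j}
        ≤ ∑ l ∈ range (j + 1), (#B).choose l * (#U - #B).choose (m - l) :=
      (card_le_card (monotone_filter_right _ fun S _ hS =>
        (card_le_card (inter_subset_inter_left hBA)).trans hS)).trans
        (card_filter_powersetCard_card_inter_le_le (hBA.trans hAU) m j)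
    rw [hB, hN] at hcount
    rw [PMF.toOuterMeasure_uniformOfFinset_apply, ENNReal.toReal_div, card_powersetCard, hN]
    simp only [F, ENNReal.toReal_natCast, Set.mem_ofPred_eq, ← sum_div]
    exact div_le_div_of_nonneg_right (by exact_mod_cast hcount) (Nat.cast_nonneg _)
  exact ⟨hcdf, PMF.toReal_toOuterMeasure_le_of_cdf_le _ (fun S => #(S ∩ A)) F hcdf⟩

/-- **validity of the underrepresentation P-value.** Let `U` be a finite set
with `|U| = N`, `A ⊆ U` with `|A| = K`, `σ ∈ (0,1]`, and let `S` be a uniformly random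
`m`-element subset of `U`. If `K ≥ ⌈σ·N⌉` (the candidate meets the selectivity threshold),
then for every observed count `j`,
`P(|S ∩ A| ≤ j) ≤ ∑_{l=0}^{j} C(⌈σN⌉, l) * C(N - ⌈σN⌉, m - l) / C(N, m)`;
hence rejecting the null hypothesis `K ≥ ⌈σN⌉` whenever this lower-tail sum (evaluated at the
observed count) is at most `δi` gives a test whose probability of falsely rejecting
is at most `δi`. -/
theorem underrepresentation_pvalue_valid {α : Type*} [DecidableEq α]
    (U A : Finset α) (hAU : A ⊆ U)
    (N K m : ℕ) (hN : U.card = N) (hK : A.card = K) (hm : m ≤ N)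
    (σ : ℝ) (hσ0 : 0 < σ) (hσ1 : σ ≤ 1)
    (hsel : ⌈σ * (N : ℝ)⌉₊ ≤ K)
    (hne : (U.powersetCard m).Nonempty) :
    (∀ j : ℕ,
      ((PMF.uniformOfFinset (U.powersetCard m) hne).toOuterMeasure
          {S | (S ∩ A).card ≤ j}).toReal
        ≤ ∑ l ∈ Finset.range (j + 1),
            ((⌈σ * (N : ℝ)⌉₊.choose l * (N - ⌈σ * (N : ℝ)⌉₊).choose (m - l) : ℝ)
              / (N.choose m)))
    ∧ ∀ δi : ℝ, 0 ≤ δi →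
      ((PMF.uniformOfFinset (U.powersetCard m) hne).toOuterMeasure
          {S | (∑ l ∈ Finset.range ((S ∩ A).card + 1),
            ((⌈σ * (N : ℝ)⌉₊.choose l * (N - ⌈σ * (N : ℝ)⌉₊).choose (m - l) : ℝ)
              / (N.choose m))) ≤ δi}).toReal
        ≤ δi :=
  underrepresentation_pvalue_valid_general U A hAU N K m hN hK σ hsel hne
end

section
/- Let p be a probability distribution on Fin k, let δ ∈ (0,1) and ε > 0, and let p̂ be the empirical distribution of n independent samples from p. If n ≥ (2/ε²)·(k·log 2 + log(1/δ)), then the probability that ‖p̂ − p‖₁ > ε is at most δ. -/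
/-!
`‖p̂ - p‖₁` is the largest of the `2 ^ k` sums `∑ j, s j * (p̂ j - p j)` over sign
vectors `s ∈ {-1, 1} ^ k`, and each such sum equals `(1/n) ∑ i, s (X i) - 𝔼[s (X 1)]`, the
deviation of an average of `n` independent variables with values in `[-1, 1]`. Hoeffding's
inequality bounds the probability that it exceeds `ε` by `exp (-n ε² / 2)`, and a union bound
over the sign vectors gives `2 ^ k * exp (-n ε² / 2) ≤ δ`.
-/

open MeasureTheory ProbabilityTheory Real

theorem integral_comp_eq_sum_mul_measureReal {Ω α : Type*} [MeasurableSpace Ω]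
    {μ : Measure Ω} [IsFiniteMeasure μ] [Fintype α] [MeasurableSpace α]
    [DiscreteMeasurableSpace α] {X : Ω → α} (hX : Measurable X) (f : α → ℝ) :
    ∫ ω, f (X ω) ∂μ = ∑ a, f a * μ.real {ω | X ω = a} := by
  rw [← integral_map hX.aemeasurable .of_discrete, integral_fintype .of_finite]
  refine Finset.sum_congr rfl fun a _ => ?_
  rw [map_measureReal_apply hX (.singleton a), smul_eq_mul, mul_comm]
  rfl

theorem measureReal_sum_sub_integral_ge_le_of_mem_Icc {Ω ι : Type*} [MeasurableSpace Ω]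
    {μ : Measure Ω} [IsProbabilityMeasure μ] [Fintype ι] {Y : ι → Ω → ℝ}
    (hindep : iIndepFun Y μ) (hY : ∀ i, AEMeasurable (Y i) μ) {a b : ℝ}
    (hab : ∀ i, ∀ᵐ ω ∂μ, Y i ω ∈ Set.Icc a b) {t : ℝ} (ht : 0 ≤ t) :
    μ.real {ω | t ≤ ∑ i, (Y i ω - μ[Y i])} ≤
      exp (-2 * t ^ 2 / (Fintype.card ι * (b - a) ^ 2)) := by
  have hcentered : iIndepFun (fun i ω => Y i ω - μ[Y i]) μ := by
    have := hindep.comp (fun i x => x - μ[Y i]) fun _ => measurable_id.sub_const _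
    exact this
  have h := HasSubgaussianMGF.measure_sum_ge_le_of_iIndepFun hcentered
    (s := Finset.univ) (fun i _ => hasSubgaussianMGF_of_mem_Icc (hY i) (hab i)) ht
  refine h.trans_eq (congrArg exp ?_)
  simp only [Finset.sum_const, Finset.card_univ, nsmul_eq_mul, NNReal.coe_mul, NNReal.coe_natCast,
    NNReal.coe_pow, NNReal.coe_div, coe_nnnorm, norm_eq_abs, NNReal.coe_ofNat, div_pow, sq_abs]
  rw [show 2 * (_ * ((b - a) ^ 2 / 2 ^ 2)) = Fintype.card ι * (b - a) ^ 2 / 2 by ring,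
    div_div_eq_mul_div]
  ring

theorem measureReal_sum_comp_ge_le {Ω ι α : Type*} [MeasurableSpace Ω]
    {μ : Measure Ω} [IsProbabilityMeasure μ] [Fintype ι] [Fintype α] [MeasurableSpace α]
    [DiscreteMeasurableSpace α] {X : ι → Ω → α} (hX : ∀ i, Measurable (X i))
    (hindep : iIndepFun X μ) {p : α → ℝ} (hlaw : ∀ i a, μ.real {ω | X i ω = a} = p a)
    {f : α → ℝ} (hf : ∀ a, f a ∈ Set.Icc (-1) 1) {ε : ℝ} (hε : 0 ≤ ε) :
    μ.real {ω | Fintype.card ι * (∑ a, f a * p a + ε) ≤ ∑ i, f (X i ω)} ≤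
      exp (-(Fintype.card ι * ε ^ 2 / 2)) := by
  have hmean : ∀ i, μ[fun ω => f (X i ω)] = ∑ a, f a * p a := fun i => by
    simp only [integral_comp_eq_sum_mul_measureReal (hX i), hlaw]
  have h := measureReal_sum_sub_integral_ge_le_of_mem_Icc
    (hindep.comp (fun _ => f) fun _ => .of_discrete)
    (fun i => ((measurable_of_countable f).comp (hX i)).aemeasurable)
    (fun i => .of_forall fun ω => hf (X i ω)) (t := Fintype.card ι * ε) (by positivity)
  simp only [Function.comp_apply, hmean, Finset.sum_sub_distrib, Finset.sum_const,
    Finset.card_univ, nsmul_eq_mul] at h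
  convert h using 2
  · ext ω
    simp only [Set.mem_ofPred_eq]
    constructor <;> intro h <;> linarith
  · rcases eq_or_ne (Fintype.card ι : ℝ) 0 with hn | hn
    · simp [hn]
    · field_simp; ring

theorem sum_mul_card_filter_eq_sum_comp {ι α R : Type*} [Fintype ι] [Fintype α] [DecidableEq α]
    [Semiring R] (x : ι → α) (f : α → R) :
    ∑ a, f a * (Finset.univ.filter (fun i => x i = a)).card = ∑ i, f (x i) := by
  rw [← Finset.sum_fiberwise Finset.univ x (fun i => f (x i))]
  refine Finset.sum_congr rfl fun a _ => ?_
  rw [Finset.sum_congr rfl fun i hi => by rw [(Finset.mem_filter.1 hi).2],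
    Finset.sum_const, nsmul_eq_mul, Nat.cast_comm]

def boolToSign (b : Bool) : ℝ := if b then 1 else -1

theorem boolToSign_mem_Icc (b : Bool) : boolToSign b ∈ Set.Icc (-1) 1 := by
  cases b <;> norm_num [boolToSign]

theorem exists_sum_abs_eq_sum_boolToSign_mul {α : Type*} [Fintype α] (v : α → ℝ) :
    ∃ b : α → Bool, ∑ a, |v a| = ∑ a, boolToSign (b a) * v a := by
  refine ⟨fun a => decide (0 ≤ v a), Finset.sum_congr rfl fun a _ => ?_⟩
  by_cases h : 0 ≤ v a
  · simp [boolToSign, h, abs_of_nonneg]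
  · simp [boolToSign, h, abs_of_neg (not_le.1 h)]

theorem two_pow_mul_exp_neg_le {k : ℕ} {N δ : ℝ} (hδ : 0 < δ)
    (hN : k * log 2 + log (1 / δ) ≤ N) : 2 ^ k * exp (-N) ≤ δ :=
  calc 2 ^ k * exp (-N) = exp (k * log 2 - N) := by
        rw [exp_sub, exp_nat_mul, exp_log two_pos, div_eq_mul_inv, exp_neg]
    _ ≤ exp (log δ) := exp_le_exp.2 (by rw [one_div, log_inv] at hN; linarith)
    _ = δ := exp_log hδ

theorem empirical_l1_sample_size_general
    {Ω : Type*} [MeasurableSpace Ω] (μ : Measure Ω) [IsProbabilityMeasure μ]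
    (k n : ℕ) (p : Fin k → ℝ)
    (X : Fin n → Ω → Fin k) (hXmeas : ∀ i, Measurable (X i))
    (hindep : iIndepFun X μ)
    (hlaw : ∀ i j, (μ {ω | X i ω = j}).toReal = p j)
    (phat : Ω → Fin k → ℝ)
    (hphat : ∀ ω j, phat ω j
      = (1 / (n : ℝ)) * (Finset.univ.filter (fun i => X i ω = j)).card)
    (δ : ℝ) (hδ0 : 0 < δ) (hδ1 : δ < 1) (ε : ℝ) (hε : 0 < ε)
    (hn : (2 / ε ^ 2) * (k * Real.log 2 + Real.log (1 / δ)) ≤ (n : ℝ)) :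
    (μ {ω | ε < ∑ j, |phat ω j - p j|}).toReal ≤ δ := by
  have hN : k * log 2 + log (1 / δ) ≤ n * ε ^ 2 / 2 := by
    rw [div_mul_eq_mul_div, div_le_iff₀ (by positivity)] at hn
    linarith
  have hn0 : (0 : ℝ) < n := by
    have hlog : 0 < log (1 / δ) := log_pos (one_lt_one_div hδ0 hδ1)
    have : (0 : ℝ) < n * ε ^ 2 / 2 := (add_pos_of_nonneg_of_pos (by positivity) hlog).trans_le hN
    exact pos_of_mul_pos_left (by linarith) (sq_nonneg ε)
  have hempirical (ω : Ω) (f : Fin k → ℝ) :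
      ∑ j, f j * phat ω j = (1 / n) * ∑ i, f (X i ω) := by
    simp_rw [hphat, ← sum_mul_card_filter_eq_sum_comp (X · ω) f, Finset.mul_sum]
    exact Finset.sum_congr rfl fun j _ => by ring
  set E : (Fin k → Bool) → Set Ω := fun b =>
    {ω | n * (∑ j, boolToSign (b j) * p j + ε) ≤ ∑ i, boolToSign (b (X i ω))}
  have hsub : {ω | ε < ∑ j, |phat ω j - p j|} ⊆ ⋃ b, E b := by
    intro ω hω
    obtain ⟨b, hb⟩ := exists_sum_abs_eq_sum_boolToSign_mul (fun j => phat ω j - p j)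
    refine Set.mem_iUnion.2 ⟨b, ?_⟩
    simp only [E, Set.mem_ofPred_eq, hb, mul_sub, Finset.sum_sub_distrib,
      hempirical ω (fun j => boolToSign (b j))] at hω ⊢
    rw [lt_sub_iff_add_lt, one_div, inv_mul_eq_div, lt_div_iff₀ hn0] at hω
    linarith
  calc (μ {ω | ε < ∑ j, |phat ω j - p j|}).toReal
      ≤ μ.real (⋃ b, E b) := measureReal_mono hsub
    _ ≤ ∑ b, μ.real (E b) := measureReal_iUnion_fintype_le E
    _ ≤ ∑ _b : Fin k → Bool, exp (-(n * ε ^ 2 / 2)) := Finset.sum_le_sum fun b _ => by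
        simpa using measureReal_sum_comp_ge_le hXmeas hindep hlaw
          (fun j => boolToSign_mem_Icc (b j)) hε.le
    _ = 2 ^ k * exp (-(n * ε ^ 2 / 2)) := by simp
    _ ≤ δ := two_pow_mul_exp_neg_le hδ0 hN

/-- Let `p` be a probability distribution on `Fin k`, let `δ ∈ (0,1)` and
`ε > 0`, and let `phat` be the empirical distribution of `n` independent samples from `p`.
If `n ≥ (2/ε²) * (k * log 2 + log (1/δ))`, then the probability that `‖phat - p‖₁ > ε` is at
most `δ`. -/
theorem empirical_l1_sample_size
    {Ω : Type*} [MeasurableSpace Ω] (μ : Measure Ω) [IsProbabilityMeasure μ]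
    (k n : ℕ) (p : Fin k → ℝ) (hp0 : ∀ j, 0 ≤ p j) (hp1 : ∑ j, p j = 1)
    (X : Fin n → Ω → Fin k) (hXmeas : ∀ i, Measurable (X i))
    (hindep : iIndepFun X μ)
    (hlaw : ∀ i j, (μ {ω | X i ω = j}).toReal = p j)
    (phat : Ω → Fin k → ℝ)
    (hphat : ∀ ω j, phat ω j
      = (1 / (n : ℝ)) * (Finset.univ.filter (fun i => X i ω = j)).card)
    (δ : ℝ) (hδ0 : 0 < δ) (hδ1 : δ < 1) (ε : ℝ) (hε : 0 < ε)
    (hn : (2 / ε ^ 2) * (k * Real.log 2 + Real.log (1 / δ)) ≤ (n : ℝ)) :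
    (μ {ω | ε < ∑ j, |phat ω j - p j|}).toReal ≤ δ :=
  empirical_l1_sample_size_general μ k n p X hXmeas hindep hlaw phat hphat δ hδ0 hδ1 ε hε hn
end
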